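/- Let P and Q be orthogonal projections on ℝⁿ and U = (2P − I)(2Q − I). Then a vector z satisfies Uz = −z if and only if z lies in (col(P) ∩ ker(Q)) ⊕ (ker(P) ∩ col(Q)). -/

import Mathlib

/-!
Since `P` is idempotent, `2P - I` is an involution, so `Uz = -z` is equivalent to
`(2Q - I)z = -(2P - I)z`, i.e. to `Pz + Qz = z`. Applying `P` and `Q` to the latter gives
`PQz = 0` and `QPz = 0`, so `z = Pz + Qz` is a decomposition of the required kind; conversely
`P` and `Q` act on such a decomposition `x + y` as `x` and `y` respectively.
-/

open Matrix LinearMap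

theorem IsIdempotentElem.two_mul_sub_one_mul_self {A : Type*} [Ring A] {p : A}
    (hp : IsIdempotentElem p) : (2 * p - 1) * (2 * p - 1) = 1 := by
  calc (2 * p - 1) * (2 * p - 1) = 4 * (p * p) - 4 * p + 1 := by noncomm_ring
    _ = 1 := by rw [hp.eq]; noncomm_ring

section

variable {R M : Type*} [Ring R] [AddCommGroup M] [Module R M] {p q : Module.End R M}

theorem IsIdempotentElem.two_mul_sub_one_mul_apply_eq_neg_iff [IsAddTorsionFree M]
    (hp : IsIdempotentElem p) (z : M) :
    ((2 * p - 1) * (2 * q - 1)) z = -z ↔ p z + q z = z := by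
  have hinv : Function.Involutive ⇑(2 * p - 1) := fun v => by
    rw [← Module.End.mul_apply, hp.two_mul_sub_one_mul_self, Module.End.one_apply]
  rw [Module.End.mul_apply, hinv.eq_iff, map_neg]
  simp only [LinearMap.sub_apply, Module.End.mul_apply, Module.End.ofNat_apply,
    Module.End.one_apply]
  rw [neg_sub, sub_eq_sub_iff_add_eq_add, ← smul_add, ← two_nsmul, nsmul_right_inj two_ne_zero,
    add_comm]

theorem IsIdempotentElem.apply_apply_eq_zero_of_add_apply_eq_self (hp : IsIdempotentElem p)
    {z : M} (h : p z + q z = z) : p (q z) = 0 := by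
  have := congrArg p h
  rwa [map_add, ← Module.End.mul_apply, hp.eq, add_eq_left] at this

theorem IsIdempotentElem.add_apply_eq_self_iff_mem_sup (hp : IsIdempotentElem p)
    (hq : IsIdempotentElem q) (z : M) :
    p z + q z = z ↔ z ∈ (range p ⊓ ker q) ⊔ (ker p ⊓ range q) := by
  constructor
  · intro h
    have hqp := hq.apply_apply_eq_zero_of_add_apply_eq_self ((add_comm _ _).trans h)
    have hpq := hp.apply_apply_eq_zero_of_add_apply_eq_self h
    exact Submodule.mem_sup.2 ⟨p z, ⟨mem_range_self p z, hqp⟩, q z, ⟨hpq, mem_range_self q z⟩, h⟩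
  · intro h
    obtain ⟨x, hx, y, hy, rfl⟩ := Submodule.mem_sup.1 h
    rw [Submodule.mem_inf, hp.mem_range_iff, mem_ker] at hx
    rw [Submodule.mem_inf, hq.mem_range_iff, mem_ker] at hy
    simp [hx, hy, add_comm]

end

theorem stmt_4_general {n : ℕ} (P Q : Matrix (Fin n) (Fin n) ℝ)
    (hP2 : P * P = P) (hQ2 : Q * Q = Q)
    (z : Fin n → ℝ) :
    (((2 : ℝ) • P - 1) * ((2 : ℝ) • Q - 1)) *ᵥ z = -z ↔
    z ∈ (LinearMap.range (Matrix.toLin' P) ⊓ LinearMap.ker (Matrix.toLin' Q)) ⊔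
        (LinearMap.ker (Matrix.toLin' P) ⊓ LinearMap.range (Matrix.toLin' Q)) := by
  have hP : IsIdempotentElem (toLin' P) := IsIdempotentElem.map hP2 toLinAlgEquiv'
  have hQ : IsIdempotentElem (toLin' Q) := IsIdempotentElem.map hQ2 toLinAlgEquiv'
  rw [← hP.add_apply_eq_self_iff_mem_sup hQ, ← hP.two_mul_sub_one_mul_apply_eq_neg_iff,
    ← toLin'_apply]
  -- `toLin'` is the underlying map of the algebra equivalence `toLinAlgEquiv'`.
  change toLinAlgEquiv' _ z = -z ↔ _
  simp only [map_mul, map_sub, map_one, map_natCast, ofNat_smul_eq_nsmul, nsmul_eq_mul]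
  rfl

theorem stmt_4 {n : ℕ} (P Q : Matrix (Fin n) (Fin n) ℝ)
    (hP2 : P * P = P) (hPs : Pᵀ = P) (hQ2 : Q * Q = Q) (hQs : Qᵀ = Q)
    (z : Fin n → ℝ) :
    (((2 : ℝ) • P - 1) * ((2 : ℝ) • Q - 1)) *ᵥ z = -z ↔
    z ∈ (LinearMap.range (Matrix.toLin' P) ⊓ LinearMap.ker (Matrix.toLin' Q)) ⊔
        (LinearMap.ker (Matrix.toLin' P) ⊓ LinearMap.range (Matrix.toLin' Q)) :=
  stmt_4_general P Q hP2 hQ2 z
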